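/- arXiv:1603.02853 — 3 statements merged into one kernel-verified Lean document; each statement's English description precedes it below -/
import Mathlib

section
/- If two rays r_{θ-ε} and r_{θ+ε} from q pass through no vertex of P and no vertex of P has angle in (θ-ε, θ+ε), then the sets of edges of P intersected by r_{θ-ε} and by r_{θ+ε} are equal. -/
open Set

/-- A simple polygon in the plane, given by its cyclic sequence of vertices.
Non-adjacent edges are disjoint, and adjacent edges meet exactly in their
shared vertex. -/
structure SimplePolygon where
  n : ℕ
  three_le : 3 ≤ n
  vtx : ZMod n → ℝ × ℝ
  inj : Function.Injective vtx
  nondegenerate : ∀ i j : ZMod n, i ≠ j → i + 1 ≠ j → j + 1 ≠ i →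
    segment ℝ (vtx i) (vtx (i + 1)) ∩ segment ℝ (vtx j) (vtx (j + 1)) = ∅
  consecutive : ∀ i : ZMod n,
    segment ℝ (vtx i) (vtx (i + 1)) ∩ segment ℝ (vtx (i + 1)) (vtx (i + 1 + 1))
      = {vtx (i + 1)}

namespace SimplePolygon

variable (P : SimplePolygon)

/-- The `i`-th edge of the polygon, from vertex `i` to vertex `i+1`. -/
def edge (i : ZMod P.n) : Set (ℝ × ℝ) := segment ℝ (P.vtx i) (P.vtx (i + 1))

/-- The boundary `∂P` of the polygon: the union of its edges. -/
def boundary : Set (ℝ × ℝ) := ⋃ i : ZMod P.n, P.edge i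

/-- The interior of the polygon (Jordan): points off the boundary whose
connected component in the complement of the boundary is bounded. -/
def inside : Set (ℝ × ℝ) :=
  {x | x ∉ P.boundary ∧ Bornology.IsBounded (connectedComponentIn P.boundaryᶜ x)}

/-- The polygon as a region of the plane: interior together with boundary. -/
def region : Set (ℝ × ℝ) := P.inside ∪ P.boundary

/-- The set of (indices of) edges of `P` properly met by the open segment `qp`
(the endpoints `q`, `p` are not counted). -/
def crossSet (q p : ℝ × ℝ) : Set (ZMod P.n) :=
  {i | (openSegment ℝ q p ∩ P.edge i).Nonempty}

/-- The number of times the segment `qp` crosses the boundary of `P`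
(endpoints not counted). -/
noncomputable def crossCount (q p : ℝ × ℝ) : ℕ := (P.crossSet q p).ncard

/-- The k-visibility region `V_k(P,q)`: the points of `P` whose segment to `q`
crosses the boundary at most `k` times. -/
def vis (q : ℝ × ℝ) (k : ℕ) : Set (ℝ × ℝ) :=
  {p | p ∈ P.region ∧ P.crossCount q p ≤ k}

/-- No vertex of `P` lies on the segment `qp`. -/
def segAvoidsVtx (q p : ℝ × ℝ) : Prop := ∀ i : ZMod P.n, P.vtx i ∉ segment ℝ q p

/-- Weak general position: `q` lies on no line through two vertices of `P`. -/
def wgp (q : ℝ × ℝ) : Prop :=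
  ∀ i j : ZMod P.n, i ≠ j → ¬ Collinear ℝ ({q, P.vtx i, P.vtx j} : Set (ℝ × ℝ))

/-- Signed area test: positive iff `x` is strictly to the left of the ray `qv`. -/
noncomputable def cross2 (q v x : ℝ × ℝ) : ℝ :=
  (v.1 - q.1) * (x.2 - q.2) - (v.2 - q.2) * (x.1 - q.1)

/-- Vertex `i` is critical for `q`: both incident edges (i.e. both neighbouring
vertices) lie strictly on the same side of the line through `q` and `vtx i`. -/
def isCritical (q : ℝ × ℝ) (i : ZMod P.n) : Prop :=
  0 < cross2 q (P.vtx i) (P.vtx (i - 1)) * cross2 q (P.vtx i) (P.vtx (i + 1))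

/-- A start critical vertex: both incident edges to the left of ray `qv`. -/
def isStart (q : ℝ × ℝ) (i : ZMod P.n) : Prop :=
  0 < cross2 q (P.vtx i) (P.vtx (i - 1)) ∧ 0 < cross2 q (P.vtx i) (P.vtx (i + 1))

/-- An end critical vertex: both incident edges to the right of ray `qv`. -/
def isEnd (q : ℝ × ℝ) (i : ZMod P.n) : Prop :=
  cross2 q (P.vtx i) (P.vtx (i - 1)) < 0 ∧ cross2 q (P.vtx i) (P.vtx (i + 1)) < 0

/-- The unit vector of direction `θ`. -/
noncomputable def dir (θ : ℝ) : ℝ × ℝ := (Real.cos θ, Real.sin θ)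

/-- The ray `r_θ` from `q` in direction `θ`. -/
def rayFrom (q : ℝ × ℝ) (θ : ℝ) : Set (ℝ × ℝ) :=
  {x | ∃ t : ℝ, 0 ≤ t ∧ x = q + t • dir θ}

/-- The edge list of the ray `r_θ` (as a set of edge indices). -/
def hits (q : ℝ × ℝ) (θ : ℝ) : Set (ZMod P.n) :=
  {i | (rayFrom q θ ∩ P.edge i).Nonempty}

/-- The parameter (distance from `q`) at which the ray `r_θ` first meets edge `i`. -/
noncomputable def hitTime (q : ℝ × ℝ) (θ : ℝ) (i : ZMod P.n) : ℝ :=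
  sInf {t : ℝ | 0 ≤ t ∧ q + t • dir θ ∈ P.edge i}

/-- The position (rank) of edge `i` in the distance-ordered edge list of `r_θ`:
the number of hit edges met strictly earlier. -/
noncomputable def rank (q : ℝ × ℝ) (θ : ℝ) (i : ZMod P.n) : ℕ :=
  {j | j ∈ P.hits q θ ∧ P.hitTime q θ j < P.hitTime q θ i}.ncard

end SimplePolygon

open SimplePolygon

/-!
For a fixed edge, the set of angles whose ray meets the edge is closed, because the edge is
compact. It is moreover a neighbourhood of every angle whose ray meets the edge without passing
through an endpoint: weak general position keeps `q` off the line of the edge, so the ray crosses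
the edge transversally and the crossing persists under small rotations. A closed set that is
open relative to the interval `[θ - ε, θ + ε]` contains either all of it or none of it.
-/

open Filter Topology

theorem IsPreconnected.mem_iff_mem_of_isClosed {X : Type*} [TopologicalSpace X] {S s : Set X}
    (hS : IsPreconnected S) (hs : IsClosed s) (hopen : ∀ x ∈ S ∩ s, s ∈ 𝓝 x) {x y : X}
    (hx : x ∈ S) (hy : y ∈ S) : x ∈ s ↔ y ∈ s := by
  have hint : S ∩ s ⊆ interior s := fun w hw => mem_interior_iff_mem_nhds.2 (hopen w hw)
  have hsub : ∀ z ∈ S, z ∈ s → S ⊆ s := fun z hz hzs =>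
    (hS.subset_of_closure_inter_subset isOpen_interior ⟨z, hz, hint ⟨hz, hzs⟩⟩
      fun w ⟨hw, hwS⟩ => hint ⟨hwS, closure_minimal interior_subset hs hw⟩).trans
      interior_subset
  exact ⟨fun h => hsub x hx h hy, fun h => hsub y hy h hx⟩

def det2 (u w : ℝ × ℝ) : ℝ := u.1 * w.2 - u.2 * w.1

theorem det2_neg_left (u w : ℝ × ℝ) : det2 (-u) w = -det2 u w := by
  simp only [det2, Prod.fst_neg, Prod.snd_neg]
  ring

theorem collinear_of_det2_eq_zero {q a b : ℝ × ℝ} (h : det2 (q - a) (b - a) = 0) :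
    Collinear ℝ ({q, a, b} : Set (ℝ × ℝ)) := by
  rcases eq_or_ne b a with rfl | hba
  · simpa using collinear_pair ℝ q b
  have hw : 0 < (b - a).1 ^ 2 + (b - a).2 ^ 2 := by
    by_contra! hle
    have h₁ : (b - a).1 = 0 := by nlinarith [sq_nonneg (b - a).1, sq_nonneg (b - a).2]
    have h₂ : (b - a).2 = 0 := by nlinarith [sq_nonneg (b - a).1, sq_nonneg (b - a).2]
    exact sub_ne_zero.2 hba (Prod.ext h₁ h₂)
  rw [collinear_iff_of_mem (by simp : a ∈ ({q, a, b} : Set (ℝ × ℝ)))]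
  refine ⟨b - a, ?_⟩
  rintro p (rfl | rfl | rfl)
  · -- `p - a` is its own orthogonal projection onto `b - a`, as the determinant vanishes
    refine ⟨((p - a).1 * (b - a).1 + (p - a).2 * (b - a).2) / ((b - a).1 ^ 2 + (b - a).2 ^ 2),
      Prod.ext ?_ ?_⟩ <;>
    simp only [det2, Prod.fst_sub, Prod.snd_sub] at h hw <;>
    simp only [vadd_eq_add, Prod.fst_add, Prod.snd_add, Prod.smul_fst, Prod.smul_snd,
      smul_eq_mul, Prod.fst_sub, Prod.snd_sub] <;>
    field_simp
    · linear_combination (b.2 - a.2) * h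
    · linear_combination (a.1 - b.1) * h
  · exact ⟨0, by simp⟩
  · exact ⟨1, by simp⟩

theorem det2_ne_zero_of_not_collinear {q a b : ℝ × ℝ}
    (h : ¬Collinear ℝ ({q, a, b} : Set (ℝ × ℝ))) : det2 (q - a) (b - a) ≠ 0 :=
  mt collinear_of_det2_eq_zero h

-- Cramer's rule for the intersection of the lines `q + ℝ u` and `a + ℝ w`.
theorem add_smul_eq_add_smul_of_det2_ne_zero (q a u w : ℝ × ℝ) (hD : det2 u w ≠ 0) :
    q + (det2 (a - q) w / det2 u w) • u = a + (det2 u (q - a) / det2 u w) • w := by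
  apply Prod.ext <;>
  · simp only [Prod.fst_add, Prod.snd_add, Prod.smul_fst, Prod.smul_snd, smul_eq_mul]
    rw [div_mul_eq_mul_div, div_mul_eq_mul_div, add_div' _ _ _ hD, add_div' _ _ _ hD,
      div_left_inj' hD]
    simp only [det2, Prod.fst_sub, Prod.snd_sub]
    ring

theorem mul_det2_eq_of_add_smul_eq_add_smul {q a u w : ℝ × ℝ} {t s : ℝ}
    (h : q + t • u = a + s • w) :
    t * det2 u w = det2 (a - q) w ∧ s * det2 u w = det2 u (q - a) := by
  have h₁ := congrArg Prod.fst h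
  have h₂ := congrArg Prod.snd h
  simp only [Prod.fst_add, Prod.snd_add, Prod.smul_fst, Prod.smul_snd, smul_eq_mul] at h₁ h₂
  constructor <;> simp only [det2, Prod.fst_sub, Prod.snd_sub]
  · linear_combination w.2 * h₁ - w.1 * h₂
  · linear_combination u.2 * h₁ - u.1 * h₂

theorem eventually_exists_add_smul_mem_segment {q a b u₀ : ℝ × ℝ} {t₀ s₀ : ℝ}
    (hcol : ¬Collinear ℝ ({q, a, b} : Set (ℝ × ℝ))) (ht₀ : 0 ≤ t₀) (hs₀ : s₀ ∈ Ioo (0 : ℝ) 1)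
    (h : q + t₀ • u₀ = a + s₀ • (b - a)) :
    ∀ᶠ u in 𝓝 u₀, ∃ t : ℝ, 0 ≤ t ∧ q + t • u ∈ segment ℝ a b := by
  obtain ⟨ht, hs⟩ := mul_det2_eq_of_add_smul_eq_add_smul h
  have htD : t₀ * det2 u₀ (b - a) ≠ 0 := by
    rw [ht, ← neg_sub, det2_neg_left, neg_ne_zero]
    exact det2_ne_zero_of_not_collinear hcol
  obtain ⟨ht₀', hD₀⟩ := mul_ne_zero_iff.1 htD
  have hD : Continuous fun u : ℝ × ℝ => det2 u (b - a) := by unfold det2; fun_prop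
  have hT : ContinuousAt (fun u => det2 (a - q) (b - a) / det2 u (b - a)) u₀ :=
    continuousAt_const.div hD.continuousAt hD₀
  have hS : ContinuousAt (fun u => det2 u (q - a) / det2 u (b - a)) u₀ :=
    ((by unfold det2; fun_prop : Continuous fun u : ℝ × ℝ => det2 u (q - a))).continuousAt.div
      hD.continuousAt hD₀
  have hT₀ : det2 (a - q) (b - a) / det2 u₀ (b - a) = t₀ := (eq_div_of_mul_eq hD₀ ht).symm
  have hS₀ : det2 u₀ (q - a) / det2 u₀ (b - a) = s₀ := (eq_div_of_mul_eq hD₀ hs).symm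
  filter_upwards [hD.continuousAt.eventually_ne hD₀,
    hT.eventually (lt_mem_nhds (hT₀ ▸ ht₀.lt_of_ne' ht₀')),
    hS.eventually (isOpen_Ioo.mem_nhds (hS₀ ▸ hs₀))] with u hDu hTu hSu
  refine ⟨_, hTu.le, ?_⟩
  rw [add_smul_eq_add_smul_of_det2_ne_zero q a u (b - a) hDu, segment_eq_image']
  exact ⟨_, Ioo_subset_Icc_self hSu, rfl⟩

namespace SimplePolygon

theorem continuous_dir : Continuous dir := by
  unfold dir
  fun_prop

theorem mem_rayFrom_iff {q x : ℝ × ℝ} {φ : ℝ} :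
    x ∈ rayFrom q φ ↔
      det2 (dir φ) (x - q) = 0 ∧ 0 ≤ (dir φ).1 * (x - q).1 + (dir φ).2 * (x - q).2 := by
  have hc := Real.cos_sq_add_sin_sq φ
  simp only [rayFrom, dir, mem_ofPred_eq, det2, Prod.fst_sub, Prod.snd_sub]
  constructor
  · rintro ⟨t, ht, rfl⟩
    simp only [Prod.fst_add, Prod.snd_add, Prod.smul_fst, Prod.smul_snd, smul_eq_mul,
      add_sub_cancel_left]
    exact ⟨by ring, by nlinarith⟩
  · rintro ⟨h₁, h₂⟩
    refine ⟨_, h₂, Prod.ext ?_ ?_⟩ <;>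
    simp only [Prod.fst_add, Prod.snd_add, Prod.smul_fst, Prod.smul_snd, smul_eq_mul]
    · linear_combination (-Real.sin φ) * h₁ - (x.1 - q.1) * hc
    · linear_combination Real.cos φ * h₁ - (x.2 - q.2) * hc

theorem isClosed_setOf_rayFrom_inter_nonempty (q : ℝ × ℝ) {K : Set (ℝ × ℝ)} (hK : IsCompact K) :
    IsClosed {φ | (rayFrom q φ ∩ K).Nonempty} := by
  have : CompactSpace K := isCompact_iff_compactSpace.1 hK
  have hR : IsClosed {p : ℝ × K | (p.2 : ℝ × ℝ) ∈ rayFrom q p.1} := by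
    simp only [mem_rayFrom_iff, ofPred_and]
    refine .inter (isClosed_eq ?_ continuous_const) (isClosed_le continuous_const ?_) <;>
    · simp only [det2, dir]
      fun_prop
  convert isClosedMap_fst_of_compactSpace _ hR using 1
  ext φ
  exact ⟨fun ⟨x, hr, hx⟩ => ⟨(φ, ⟨x, hx⟩), hr, rfl⟩, fun ⟨⟨_, x⟩, hr, h⟩ => h ▸ ⟨x, hr, x.2⟩⟩

theorem setOf_rayFrom_inter_segment_nonempty_mem_nhds {q a b : ℝ × ℝ} {φ₀ : ℝ}
    (hcol : ¬Collinear ℝ ({q, a, b} : Set (ℝ × ℝ)))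
    (ha : a ∉ rayFrom q φ₀) (hb : b ∉ rayFrom q φ₀)
    (hhit : (rayFrom q φ₀ ∩ segment ℝ a b).Nonempty) :
    {φ | (rayFrom q φ ∩ segment ℝ a b).Nonempty} ∈ 𝓝 φ₀ := by
  obtain ⟨_, ⟨t₀, ht₀, rfl⟩, hx⟩ := hhit
  rw [segment_eq_image'] at hx
  obtain ⟨s₀, ⟨hs₀, hs₁⟩, hxs⟩ := hx
  have hs₀' : s₀ ≠ 0 := by rintro rfl; exact ha ⟨t₀, ht₀, by simpa using hxs⟩
  have hs₁' : s₀ ≠ 1 := by rintro rfl; exact hb ⟨t₀, ht₀, by simpa using hxs⟩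
  filter_upwards [(continuous_dir.tendsto φ₀).eventually (eventually_exists_add_smul_mem_segment
    hcol ht₀ ⟨hs₀.lt_of_ne' hs₀', hs₁.lt_of_ne hs₁'⟩ hxs.symm)] with φ ⟨t, ht, hmem⟩
  exact ⟨_, ⟨t, ht, rfl⟩, hmem⟩

theorem not_collinear_vtx_vtx_add_one (P : SimplePolygon) {q : ℝ × ℝ} (hw : P.wgp q)
    (i : ZMod P.n) : ¬Collinear ℝ ({q, P.vtx i, P.vtx (i + 1)} : Set (ℝ × ℝ)) := by
  have : Fact (1 < P.n) := ⟨by linarith [P.three_le]⟩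
  exact hw i (i + 1) (left_ne_add.2 one_ne_zero)

theorem isCompact_edge (P : SimplePolygon) (i : ZMod P.n) : IsCompact (P.edge i) := by
  rw [edge, segment_eq_image']
  exact isCompact_Icc.image (by fun_prop)

end SimplePolygon

theorem hits_eq_of_no_vertex_between_general (P : SimplePolygon) (q : ℝ × ℝ)
    (hw : P.wgp q) (θ ε : ℝ) (hε : 0 < ε)
    (hsec : ∀ i : ZMod P.n, ∀ φ ∈ Set.Icc (θ - ε) (θ + ε), P.vtx i ∉ rayFrom q φ) :
    P.hits q (θ - ε) = P.hits q (θ + ε) := by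
  ext i
  refine isPreconnected_Icc.mem_iff_mem_of_isClosed
    (isClosed_setOf_rayFrom_inter_nonempty q (P.isCompact_edge i)) ?_
    (left_mem_Icc.2 (by linarith)) (right_mem_Icc.2 (by linarith))
  rintro φ ⟨hφ, hhit⟩
  exact setOf_rayFrom_inter_segment_nonempty_mem_nhds (P.not_collinear_vtx_vtx_add_one hw i)
    (hsec i φ hφ) (hsec (i + 1) φ hφ) hhit

/-- If no vertex of `P` lies on a ray of angle in `[θ-ε, θ+ε]` from `q`, then
the edge lists of `r_{θ-ε}` and `r_{θ+ε}` coincide. -/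
theorem hits_eq_of_no_vertex_between (P : SimplePolygon) (q : ℝ × ℝ)
    (hq : q ∈ P.inside) (hw : P.wgp q) (θ ε : ℝ) (hε : 0 < ε)
    (hsec : ∀ i : ZMod P.n, ∀ φ ∈ Set.Icc (θ - ε) (θ + ε), P.vtx i ∉ rayFrom q φ) :
    P.hits q (θ - ε) = P.hits q (θ + ε) :=
  hits_eq_of_no_vertex_between_general P q hw θ ε hε hsec
end

section
/- Let v be a vertex of P stabbed by the ray r_θ from q whose two incident edges lie on opposite sides of the line through q and v. Then for all sufficiently small ε > 0, the edge list of r_{θ+ε} is obtained from the edge list of r_{θ-ε} by replacing one incident edge of v with the other incident edge of v, at the same position in the distance-ordered list. -/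
open Set

open SimplePolygon

/-!
A segment whose endpoints lie strictly on opposite sides of the line of `r_θ` meets that line at a
single parameter, which depends continuously on the angle; a segment with both endpoints on one
side is missed.

By weak general position, no vertex other than `v = vtx i` lies on the line of `r_θ`, and `q` lies
on no edge. So near `θ` every edge not incident to `v` keeps its hit/miss status and its hit time
varies continuously; as `v` lies on no such edge, that hit time stays away from `|qv|`. As the angle
passes `θ`, `v` changes sides, and the incident edge that is hit is the one whose far endpoint lies
on the other side from `v`. The two neighbours of `v` lie on opposite sides, so this is one incident
edge before `θ` and the other after, both hit close to `v`, hence at the same rank.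
-/

open Filter Topology

/-- `dirCoord q θ x` and `perpCoord q θ x` are the coordinates of `x - q` in the orthonormal frame
`dir θ`, `dir (θ + π / 2)`; so `perpCoord` is positive to the left of the ray `r_θ`. -/
noncomputable def perpCoord (q : ℝ × ℝ) (θ : ℝ) (x : ℝ × ℝ) : ℝ :=
  Real.cos θ * (x.2 - q.2) - Real.sin θ * (x.1 - q.1)

noncomputable def dirCoord (q : ℝ × ℝ) (θ : ℝ) (x : ℝ × ℝ) : ℝ :=
  Real.cos θ * (x.1 - q.1) + Real.sin θ * (x.2 - q.2)

/-- The parameter `t` at which the line `t ↦ q + t • dir θ` meets the line through `u` and `w`: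
the point `(1 - s) • u + s • w` with `s = perpCoord u / (perpCoord u - perpCoord w)`. -/
noncomputable def crossTime (q : ℝ × ℝ) (θ : ℝ) (u w : ℝ × ℝ) : ℝ :=
  (perpCoord q θ u * dirCoord q θ w - perpCoord q θ w * dirCoord q θ u) /
    (perpCoord q θ u - perpCoord q θ w)

section LineCoordinates

variable {q u w x : ℝ × ℝ} {θ t : ℝ}

lemma perpCoord_add_smul_dir (q : ℝ × ℝ) (θ θ' t : ℝ) :
    perpCoord q θ' (q + t • dir θ) = t * Real.sin (θ - θ') := by
  simp only [perpCoord, dir, Prod.fst_add, Prod.snd_add, Prod.smul_fst, Prod.smul_snd,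
    smul_eq_mul, Real.sin_sub]
  ring

lemma perpCoord_add_smul_dir_self (q : ℝ × ℝ) (θ t : ℝ) : perpCoord q θ (q + t • dir θ) = 0 := by
  rw [perpCoord_add_smul_dir, sub_self, Real.sin_zero, mul_zero]

lemma dirCoord_add_smul_dir (q : ℝ × ℝ) (θ t : ℝ) : dirCoord q θ (q + t • dir θ) = t := by
  simp only [dirCoord, dir, Prod.fst_add, Prod.snd_add, Prod.smul_fst, Prod.smul_snd, smul_eq_mul]
  linear_combination t * Real.sin_sq_add_cos_sq θ

lemma cross2_add_smul_dir (q x : ℝ × ℝ) (θ t : ℝ) :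
    cross2 q (q + t • dir θ) x = t * perpCoord q θ x := by
  simp only [cross2, perpCoord, dir, Prod.fst_add, Prod.snd_add, Prod.smul_fst, Prod.smul_snd,
    smul_eq_mul]
  ring

lemma eq_add_dirCoord_smul_dir (h : perpCoord q θ x = 0) : x = q + dirCoord q θ x • dir θ := by
  have hcs := Real.sin_sq_add_cos_sq θ
  simp only [perpCoord] at h
  ext
  · simp only [dirCoord, dir, Prod.fst_add, Prod.smul_fst, smul_eq_mul]
    linear_combination -Real.sin θ * h - (x.1 - q.1) * hcs
  · simp only [dirCoord, dir, Prod.snd_add, Prod.smul_snd, smul_eq_mul]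
    linear_combination Real.cos θ * h - (x.2 - q.2) * hcs

lemma perpCoord_one_sub_smul_add_smul (s : ℝ) :
    perpCoord q θ ((1 - s) • u + s • w) = (1 - s) * perpCoord q θ u + s * perpCoord q θ w := by
  simp only [perpCoord, Prod.fst_add, Prod.snd_add, Prod.smul_fst, Prod.smul_snd, smul_eq_mul]
  ring

lemma dirCoord_one_sub_smul_add_smul (s : ℝ) :
    dirCoord q θ ((1 - s) • u + s • w) = (1 - s) * dirCoord q θ u + s * dirCoord q θ w := by
  simp only [dirCoord, Prod.fst_add, Prod.snd_add, Prod.smul_fst, Prod.smul_snd, smul_eq_mul]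
  ring

lemma perpCoord_sub_ne_zero (h : perpCoord q θ u * perpCoord q θ w < 0) :
    perpCoord q θ u - perpCoord q θ w ≠ 0 := by
  intro h0
  rw [sub_eq_zero.1 h0] at h
  exact (mul_self_nonneg _).not_gt h

lemma add_crossTime_smul_dir_mem_segment (h : perpCoord q θ u * perpCoord q θ w < 0) :
    q + crossTime q θ u w • dir θ ∈ segment ℝ u w := by
  have hd := perpCoord_sub_ne_zero h
  set s := perpCoord q θ u / (perpCoord q θ u - perpCoord q θ w) with hs
  have hs01 : s ∈ Icc (0 : ℝ) 1 := by
    rcases mul_neg_iff.1 h with ⟨hu, hw⟩ | ⟨hu, hw⟩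
    · exact ⟨div_nonneg hu.le (by linarith), (div_le_one (by linarith)).2 (by linarith)⟩
    · exact ⟨div_nonneg_of_nonpos hu.le (by linarith), (div_le_one_of_neg (by linarith)).2
        (by linarith)⟩
  have hperp : perpCoord q θ ((1 - s) • u + s • w) = 0 := by
    rw [perpCoord_one_sub_smul_add_smul, hs]
    field_simp
    ring
  have hdir : dirCoord q θ ((1 - s) • u + s • w) = crossTime q θ u w := by
    rw [dirCoord_one_sub_smul_add_smul, hs, crossTime]
    field_simp
    ring
  rw [segment_eq_image]
  refine ⟨s, hs01, ?_⟩
  change (1 - s) • u + s • w = _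
  rw [eq_add_dirCoord_smul_dir hperp, hdir]

lemma eq_crossTime_of_mem_segment (hd : perpCoord q θ u - perpCoord q θ w ≠ 0)
    (ht : q + t • dir θ ∈ segment ℝ u w) : t = crossTime q θ u w := by
  rw [segment_eq_image] at ht
  obtain ⟨s, -, hs⟩ := ht
  have hperp := congrArg (perpCoord q θ) hs
  have hdir := congrArg (dirCoord q θ) hs
  rw [perpCoord_one_sub_smul_add_smul, perpCoord_add_smul_dir_self] at hperp
  rw [dirCoord_one_sub_smul_add_smul, dirCoord_add_smul_dir] at hdir
  rw [crossTime, eq_div_iff hd]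
  linear_combination
    (dirCoord q θ u - dirCoord q θ w) * hperp - (perpCoord q θ u - perpCoord q θ w) * hdir

lemma notMem_segment_of_perpCoord_mul_pos (h : 0 < perpCoord q θ u * perpCoord q θ w)
    (hx : perpCoord q θ x = 0) : x ∉ segment ℝ u w := by
  rw [segment_eq_image]
  rintro ⟨s, ⟨hs0, hs1⟩, rfl⟩
  rw [perpCoord_one_sub_smul_add_smul] at hx
  have hxu : ((1 - s) * perpCoord q θ u + s * perpCoord q θ w) * perpCoord q θ u = 0 := by
    rw [hx, zero_mul]
  have hu : 0 < perpCoord q θ u * perpCoord q θ u := by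
    rcases mul_pos_iff.1 h with ⟨hu, -⟩ | ⟨hu, -⟩ <;> nlinarith
  nlinarith [mul_nonneg hs0 h.le, mul_nonneg (sub_nonneg.2 hs1) hu.le]

lemma rayFrom_inter_segment_nonempty_iff (h : perpCoord q θ u * perpCoord q θ w < 0) :
    (rayFrom q θ ∩ segment ℝ u w).Nonempty ↔ 0 ≤ crossTime q θ u w := by
  constructor
  · rintro ⟨_, ⟨t, ht, rfl⟩, hx⟩
    exact eq_crossTime_of_mem_segment (perpCoord_sub_ne_zero h) hx ▸ ht
  · exact fun h0 => ⟨_, ⟨_, h0, rfl⟩, add_crossTime_smul_dir_mem_segment h⟩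

lemma not_rayFrom_inter_segment_nonempty (h : 0 < perpCoord q θ u * perpCoord q θ w) :
    ¬ (rayFrom q θ ∩ segment ℝ u w).Nonempty := by
  rintro ⟨_, ⟨t, -, rfl⟩, hx⟩
  exact notMem_segment_of_perpCoord_mul_pos h (perpCoord_add_smul_dir_self q θ t) hx

lemma sInf_rayHit_eq_crossTime (h : perpCoord q θ u * perpCoord q θ w < 0)
    (h0 : 0 ≤ crossTime q θ u w) :
    sInf {t | 0 ≤ t ∧ q + t • dir θ ∈ segment ℝ u w} = crossTime q θ u w := by
  have hset : {t | 0 ≤ t ∧ q + t • dir θ ∈ segment ℝ u w} = {crossTime q θ u w} := by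
    ext t
    refine ⟨fun ht => eq_crossTime_of_mem_segment (perpCoord_sub_ne_zero h) ht.2, ?_⟩
    rintro rfl
    exact ⟨h0, add_crossTime_smul_dir_mem_segment h⟩
  rw [hset, csInf_singleton]

lemma crossTime_ne_zero (h : perpCoord q θ u * perpCoord q θ w < 0) (hq : q ∉ segment ℝ u w) :
    crossTime q θ u w ≠ 0 := fun h0 =>
  hq (by simpa [h0] using add_crossTime_smul_dir_mem_segment h)

lemma crossTime_of_perpCoord_eq_zero (hu : perpCoord q θ u = 0) (hw : perpCoord q θ w ≠ 0) :
    crossTime q θ u w = dirCoord q θ u := by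
  rw [crossTime, hu]
  field_simp
  ring

end LineCoordinates

section Continuity

variable {q u w : ℝ × ℝ} {θ : ℝ}

lemma continuous_perpCoord (q x : ℝ × ℝ) : Continuous fun θ => perpCoord q θ x := by
  unfold perpCoord
  fun_prop

lemma continuous_dirCoord (q x : ℝ × ℝ) : Continuous fun θ => dirCoord q θ x := by
  unfold dirCoord
  fun_prop

lemma continuousAt_crossTime (hd : perpCoord q θ u - perpCoord q θ w ≠ 0) :
    ContinuousAt (fun θ' => crossTime q θ' u w) θ := by
  have hu := (continuous_perpCoord q u).continuousAt (x := θ)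
  have hw := (continuous_perpCoord q w).continuousAt (x := θ)
  exact ((hu.mul (continuous_dirCoord q w).continuousAt).sub
    (hw.mul (continuous_dirCoord q u).continuousAt)).div (hu.sub hw) hd

lemma eventually_perpCoord_mul_neg (h : perpCoord q θ u * perpCoord q θ w < 0) :
    ∀ᶠ θ' in 𝓝 θ, perpCoord q θ' u * perpCoord q θ' w < 0 :=
  ((continuous_perpCoord q u).mul (continuous_perpCoord q w)).continuousAt.eventually_lt
    continuousAt_const h

lemma eventually_perpCoord_mul_pos (h : 0 < perpCoord q θ u * perpCoord q θ w) :
    ∀ᶠ θ' in 𝓝 θ, 0 < perpCoord q θ' u * perpCoord q θ' w :=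
  continuousAt_const.eventually_lt
    ((continuous_perpCoord q u).mul (continuous_perpCoord q w)).continuousAt h

/-- The sides of `u` and `w` are locally constant in the angle, and so is the sign of the crossing
time, which is nonzero since `q ∉ [u, w]`. -/
lemma eventually_rayFrom_inter_segment_nonempty_iff (hu : perpCoord q θ u ≠ 0)
    (hw : perpCoord q θ w ≠ 0) (hq : q ∉ segment ℝ u w) :
    ∀ᶠ θ' in 𝓝 θ, ((rayFrom q θ' ∩ segment ℝ u w).Nonempty ↔
      (rayFrom q θ ∩ segment ℝ u w).Nonempty) := by
  rcases (mul_ne_zero hu hw).lt_or_gt with hneg | hpos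
  · have hct := continuousAt_crossTime (perpCoord_sub_ne_zero hneg)
    rw [rayFrom_inter_segment_nonempty_iff hneg]
    rcases (crossTime_ne_zero hneg hq).lt_or_gt with hc | hc
    · filter_upwards [eventually_perpCoord_mul_neg hneg,
        hct.eventually_lt continuousAt_const hc] with θ' h h'
      rw [rayFrom_inter_segment_nonempty_iff h]
      exact iff_of_false h'.not_ge hc.not_ge
    · filter_upwards [eventually_perpCoord_mul_neg hneg,
        continuousAt_const.eventually_lt hct hc] with θ' h h'
      rw [rayFrom_inter_segment_nonempty_iff h]
      exact iff_of_true h'.le hc.le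
  · filter_upwards [eventually_perpCoord_mul_pos hpos] with θ' h
    exact iff_of_false (not_rayFrom_inter_segment_nonempty h)
      (not_rayFrom_inter_segment_nonempty hpos)

lemma tendsto_sInf_rayHit (h : perpCoord q θ u * perpCoord q θ w < 0)
    (h0 : 0 < crossTime q θ u w) :
    Tendsto (fun θ' => sInf {t | 0 ≤ t ∧ q + t • dir θ' ∈ segment ℝ u w}) (𝓝 θ)
      (𝓝 (crossTime q θ u w)) := by
  have hct := continuousAt_crossTime (perpCoord_sub_ne_zero h)
  refine hct.tendsto.congr' ?_
  filter_upwards [eventually_perpCoord_mul_neg h,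
    continuousAt_const.eventually_lt hct h0] with θ' h h'
  exact (sInf_rayHit_eq_crossTime h h'.le).symm

lemma Filter.Tendsto.eventually_lt_iff {α β : Type*} [LinearOrder β] [TopologicalSpace β]
    [OrderClosedTopology β] {l : Filter α} {f g : α → β} {a b : β} (hf : Tendsto f l (𝓝 a))
    (hg : Tendsto g l (𝓝 b)) (hab : a ≠ b) : ∀ᶠ x in l, (f x < g x ↔ a < b) := by
  rcases hab.lt_or_gt with h | h
  · filter_upwards [hf.eventually_lt hg h] with x hx using iff_of_true hx h
  · filter_upwards [hg.eventually_lt hf h] with x hx using iff_of_false hx.not_gt h.not_gt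

lemma exists_pos_forall_sub_add_of_eventually_nhds {p : ℝ → Prop} {θ : ℝ}
    (h : ∀ᶠ x in 𝓝 θ, p x) : ∃ ε₀ > 0, ∀ ε, 0 < ε → ε < ε₀ → p (θ - ε) ∧ p (θ + ε) := by
  obtain ⟨δ, hδ, h⟩ := Metric.eventually_nhds_iff.1 h
  refine ⟨δ, hδ, fun ε h0 h1 => ⟨h ?_, h ?_⟩⟩ <;> simpa [Real.dist_eq, abs_of_pos h0] using h1

lemma Real.mul_sin_pos {y : ℝ} (hy : y ≠ 0) (hπ : |y| < Real.pi) : 0 < y * Real.sin y := by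
  rw [abs_lt] at hπ
  rcases hy.lt_or_gt with hy | hy
  · exact mul_pos_of_neg_of_neg hy (Real.sin_neg_of_neg_of_neg_pi_lt hy hπ.1)
  · exact mul_pos hy (Real.sin_pos_of_pos_of_lt_pi hy hπ.2)

end Continuity

namespace SimplePolygon

instance (P : SimplePolygon) : NeZero P.n := ⟨by have := P.three_le; omega⟩

variable (P : SimplePolygon) {q : ℝ × ℝ} {θ t : ℝ} {i j : ZMod P.n}

lemma add_one_ne (j : ZMod P.n) : j + 1 ≠ j := by
  have : Fact (1 < P.n) := ⟨by have := P.three_le; omega⟩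
  simp

lemma sub_one_ne (i : ZMod P.n) : i - 1 ≠ i := fun h =>
  P.add_one_ne (i - 1) (by rw [sub_add_cancel, h])

lemma vtx_notMem_edge (hj : j ∉ ({i - 1, i} : Set (ZMod P.n))) : P.vtx i ∉ P.edge j := by
  intro hmem
  have hi : P.vtx i ∈ P.edge i := left_mem_segment ℝ _ _
  by_cases hji : j = i + 1
  · subst hji
    have h : P.vtx i ∈ ({P.vtx (i + 1)} : Set (ℝ × ℝ)) := P.consecutive i ▸ ⟨hi, hmem⟩
    exact P.add_one_ne i (P.inj h).symm
  · have hij : i ≠ j := fun h => hj (by simp [h])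
    have hj1 : j + 1 ≠ i := fun h => hj (by simp [← h])
    exact (P.nondegenerate i j hij (Ne.symm hji) hj1).subset ⟨hi, hmem⟩

lemma notMem_edge_of_wgp (hw : P.wgp q) (j : ZMod P.n) : q ∉ P.edge j := fun h =>
  hw j (j + 1) (P.add_one_ne j).symm
    (collinear_insert_of_mem_affineSpan_pair (mem_segment_iff_wbtw.1 h).mem_affineSpan)

lemma vtx_ne_of_wgp (hw : P.wgp q) (i : ZMod P.n) : P.vtx i ≠ q := fun h =>
  P.notMem_edge_of_wgp hw i (h ▸ left_mem_segment ℝ _ _)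

lemma perpCoord_vtx_ne_zero (hw : P.wgp q) (hv : P.vtx i = q + t • dir θ) {k : ZMod P.n}
    (hk : k ≠ i) : perpCoord q θ (P.vtx k) ≠ 0 := fun h => by
  refine hw i k hk.symm ((collinear_iff_exists_forall_eq_smul_vadd _).2 ⟨q, dir θ, ?_⟩)
  simp only [mem_insert_iff, mem_singleton_iff, forall_eq_or_imp, forall_eq, vadd_eq_add]
  exact ⟨⟨0, by simp⟩, ⟨t, by rw [hv, add_comm]⟩,
    ⟨dirCoord q θ (P.vtx k), by rw [add_comm, ← eq_add_dirCoord_smul_dir h]⟩⟩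

lemma perpCoord_edge_ne_zero (hw : P.wgp q) (hv : P.vtx i = q + t • dir θ)
    (hj : j ∉ ({i - 1, i} : Set (ZMod P.n))) :
    perpCoord q θ (P.vtx j) ≠ 0 ∧ perpCoord q θ (P.vtx (j + 1)) ≠ 0 :=
  ⟨P.perpCoord_vtx_ne_zero hw hv fun h => hj (by simp [h]),
    P.perpCoord_vtx_ne_zero hw hv fun h => hj (by simp [← h])⟩

lemma eventually_hits_diff_eq (hw : P.wgp q) (hv : P.vtx i = q + t • dir θ) :
    ∀ᶠ θ' in 𝓝 θ, P.hits q θ' \ {i - 1, i} = P.hits q θ \ {i - 1, i} := by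
  have h : ∀ j, ∀ᶠ θ' in 𝓝 θ,
      j ∉ ({i - 1, i} : Set (ZMod P.n)) → (j ∈ P.hits q θ' ↔ j ∈ P.hits q θ) := by
    intro j
    by_cases hj : j ∈ ({i - 1, i} : Set (ZMod P.n))
    · exact .of_forall fun _ h => (h hj).elim
    · obtain ⟨h₀, h₁⟩ := P.perpCoord_edge_ne_zero hw hv hj
      filter_upwards [eventually_rayFrom_inter_segment_nonempty_iff h₀ h₁
        (P.notMem_edge_of_wgp hw j)] with θ' h _ using h
  filter_upwards [eventually_all.2 h] with θ' h
  ext j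
  exact and_congr_left (h j)

lemma eventually_hitTime_lt_iff (hw : P.wgp q) (hv : P.vtx i = q + t • dir θ) {c : ℝ → ℝ}
    (hc : Tendsto c (𝓝 θ) (𝓝 t)) :
    ∀ᶠ θ' in 𝓝 θ, ∀ j ∈ P.hits q θ \ {i - 1, i},
      (P.hitTime q θ' j < c θ' ↔ P.hitTime q θ j < t) := by
  refine eventually_all.2 fun j => ?_
  by_cases hj : j ∈ P.hits q θ \ {i - 1, i}
  · obtain ⟨hhit, hj⟩ := hj
    obtain ⟨h₀, h₁⟩ := P.perpCoord_edge_ne_zero hw hv hj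
    have hneg : perpCoord q θ (P.vtx j) * perpCoord q θ (P.vtx (j + 1)) < 0 :=
      (mul_ne_zero h₀ h₁).lt_of_le (not_lt.1 fun h => not_rayFrom_inter_segment_nonempty h hhit)
    have hpos : 0 < crossTime q θ (P.vtx j) (P.vtx (j + 1)) :=
      ((rayFrom_inter_segment_nonempty_iff hneg).1 hhit).lt_of_ne
        (crossTime_ne_zero hneg (P.notMem_edge_of_wgp hw j)).symm
    have hne : crossTime q θ (P.vtx j) (P.vtx (j + 1)) ≠ t := fun h =>
      P.vtx_notMem_edge hj (by rw [hv, ← h]; exact add_crossTime_smul_dir_mem_segment hneg)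
    have htime : P.hitTime q θ j = crossTime q θ (P.vtx j) (P.vtx (j + 1)) :=
      sInf_rayHit_eq_crossTime hneg hpos.le
    filter_upwards [(tendsto_sInf_rayHit hneg hpos).eventually_lt_iff hc hne] with θ' h _
    rw [htime]
    exact h
  · exact .of_forall fun _ h => (hj h).elim

lemma hits_eq_insert_of_perpCoord {φ : ℝ} {c d : ZMod P.n} {v zc zd : ℝ × ℝ}
    (hc : P.edge c = segment ℝ v zc) (hd : P.edge d = segment ℝ v zd)
    (hvc : perpCoord q φ v * perpCoord q φ zc < 0) (hpos : 0 ≤ crossTime q φ v zc)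
    (hvd : 0 < perpCoord q φ v * perpCoord q φ zd) :
    P.hits q φ = insert c (P.hits q φ \ {c, d}) ∧ P.hitTime q φ c = crossTime q φ v zc := by
  have hcm : c ∈ P.hits q φ := by
    change (rayFrom q φ ∩ P.edge c).Nonempty
    rw [hc]
    exact (rayFrom_inter_segment_nonempty_iff hvc).2 hpos
  have hdm : d ∉ P.hits q φ := by
    change ¬ (rayFrom q φ ∩ P.edge d).Nonempty
    rw [hd]
    exact not_rayFrom_inter_segment_nonempty hvd
  have hdc : d ≠ c := fun h => hdm (h ▸ hcm)
  refine ⟨?_, by rw [hitTime, hc]; exact sInf_rayHit_eq_crossTime hvc hpos⟩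
  ext j
  by_cases hjc : j = c
  · simp [hjc, hcm]
  · by_cases hjd : j = d
    · simp [hjd, hdm, hdc]
    · simp [hjc, hjd]

lemma hits_swap_of_eq_insert {θ₁ θ₂ : ℝ} {a b : ZMod P.n} {H : Set (ZMod P.n)} (hab : a ≠ b)
    (haH : a ∉ H) (hbH : b ∉ H) (h₁ : P.hits q θ₁ = insert a H) (h₂ : P.hits q θ₂ = insert b H)
    (hord : ∀ j ∈ H, (P.hitTime q θ₁ j < P.hitTime q θ₁ a ↔ P.hitTime q θ₂ j < P.hitTime q θ₂ b)) :
    a ∈ P.hits q θ₁ ∧ b ∉ P.hits q θ₁ ∧ P.hits q θ₂ = insert b (P.hits q θ₁ \ {a}) ∧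
      P.rank q θ₁ a = P.rank q θ₂ b := by
  have hearlier : ∀ θ' c, P.hits q θ' = insert c H →
      {j | j ∈ P.hits q θ' ∧ P.hitTime q θ' j < P.hitTime q θ' c} =
        {j | j ∈ H ∧ P.hitTime q θ' j < P.hitTime q θ' c} := by
    rintro θ' c h
    ext j
    rw [h, mem_ofPred_eq, mem_ofPred_eq, mem_insert_iff, or_and_right]
    exact or_iff_right fun ⟨hjc, hlt⟩ => (hjc ▸ hlt).false
  refine ⟨h₁ ▸ mem_insert a H, ?_, by rw [h₁, h₂, insert_sdiff_self_of_notMem haH], ?_⟩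
  · rw [h₁]
    rintro (h | h)
    exacts [hab h.symm, hbH h]
  · rw [rank, rank, hearlier θ₁ a h₁, hearlier θ₂ b h₂]
    exact congrArg ncard (ext fun j => and_congr_right (hord j))

lemma exists_incident_edges (hv : P.vtx i = q + t • dir θ)
    (hnc : cross2 q (P.vtx i) (P.vtx (i - 1)) * cross2 q (P.vtx i) (P.vtx (i + 1)) < 0) :
    ∃ a b : ZMod P.n, ∃ za zb : ℝ × ℝ, a ≠ b ∧ ({a, b} : Set (ZMod P.n)) = {i - 1, i} ∧
      P.edge a = segment ℝ (P.vtx i) za ∧ P.edge b = segment ℝ (P.vtx i) zb ∧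
      perpCoord q θ za < 0 ∧ 0 < perpCoord q θ zb := by
  have hprev : P.edge (i - 1) = segment ℝ (P.vtx i) (P.vtx (i - 1)) := by
    rw [edge, sub_add_cancel, segment_symm]
  rw [hv, cross2_add_smul_dir, cross2_add_smul_dir] at hnc
  have h : perpCoord q θ (P.vtx (i - 1)) * perpCoord q θ (P.vtx (i + 1)) < 0 := by
    nlinarith [sq_nonneg t]
  rcases mul_neg_iff.1 h with ⟨h1, h2⟩ | ⟨h1, h2⟩
  · exact ⟨i, i - 1, _, _, (P.sub_one_ne i).symm, pair_comm _ _, rfl, hprev, h2, h1⟩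
  · exact ⟨i - 1, i, _, _, P.sub_one_ne i, rfl, hprev, rfl, h1, h2⟩

/-- Turning the ray from `θ` to a nearby `θ'` moves `vtx i` to the side of sign `θ - θ'`; when this
is the side opposite to `zc`, the incident edge that is hit is `c`, at a time close to `t`. -/
lemma eventually_hits_eq_insert (hw : P.wgp q) (hv : P.vtx i = q + t • dir θ) (ht : 0 < t)
    {c d : ZMod P.n} {zc zd : ℝ × ℝ} (hcd : ({c, d} : Set (ZMod P.n)) = {i - 1, i})
    (hc : P.edge c = segment ℝ (P.vtx i) zc) (hd : P.edge d = segment ℝ (P.vtx i) zd)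
    (hz : perpCoord q θ zc * perpCoord q θ zd < 0) :
    ∀ᶠ θ' in 𝓝 θ, (θ - θ') * perpCoord q θ zc < 0 →
      P.hits q θ' = insert c (P.hits q θ \ {i - 1, i}) ∧
      ∀ j ∈ P.hits q θ \ {i - 1, i},
        (P.hitTime q θ' j < P.hitTime q θ' c ↔ P.hitTime q θ j < t) := by
  have hzc : perpCoord q θ zc ≠ 0 := left_ne_zero_of_mul hz.ne
  have hlim : Tendsto (fun θ' => crossTime q θ' (P.vtx i) zc) (𝓝 θ) (𝓝 t) := by
    have hv0 : perpCoord q θ (P.vtx i) = 0 := hv ▸ perpCoord_add_smul_dir_self q θ t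
    have hval : crossTime q θ (P.vtx i) zc = t := by
      rw [crossTime_of_perpCoord_eq_zero hv0 hzc, hv, dirCoord_add_smul_dir]
    exact hval ▸ (continuousAt_crossTime (by rwa [hv0, zero_sub, neg_ne_zero])).tendsto
  have hside : ∀ᶠ θ' in 𝓝 θ, 0 < perpCoord q θ' zc * perpCoord q θ zc :=
    continuousAt_const.eventually_lt ((continuous_perpCoord q zc).mul continuous_const).continuousAt
      (mul_self_pos.2 hzc)
  filter_upwards [P.eventually_hits_diff_eq hw hv, P.eventually_hitTime_lt_iff hw hv hlim,
    hlim.eventually (lt_mem_nhds ht), hside, eventually_perpCoord_mul_neg hz,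
    Metric.ball_mem_nhds θ Real.pi_pos] with θ' hH hord hpos hside hz' hπ hangle
  have hsin : 0 < (θ - θ') * Real.sin (θ - θ') :=
    Real.mul_sin_pos (fun h => by simp [h] at hangle) (by rwa [abs_sub_comm])
  have hvc : perpCoord q θ' (P.vtx i) * perpCoord q θ zc < 0 := by
    rw [hv, perpCoord_add_smul_dir]
    nlinarith [mul_neg_of_neg_of_pos hangle hsin, sq_nonneg (θ - θ')]
  have hvc' : perpCoord q θ' (P.vtx i) * perpCoord q θ' zc < 0 := by
    nlinarith [mul_neg_of_neg_of_pos hvc hside, mul_self_pos.2 hzc]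
  have hvd' : 0 < perpCoord q θ' (P.vtx i) * perpCoord q θ' zd := by
    nlinarith [mul_pos_of_neg_of_neg hvc' hz', mul_self_nonneg (perpCoord q θ' zc)]
  obtain ⟨hhits, htime⟩ := P.hits_eq_insert_of_perpCoord hc hd hvc' hpos.le hvd'
  rw [hcd, hH] at hhits
  exact ⟨hhits, fun j hj => htime ▸ hord j hj⟩

end SimplePolygon

theorem hits_swap_at_noncritical_general (P : SimplePolygon) (q : ℝ × ℝ)
    (hw : P.wgp q) (θ : ℝ) (i : ZMod P.n)
    (hstab : P.vtx i ∈ rayFrom q θ)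
    (hnc : cross2 q (P.vtx i) (P.vtx (i - 1)) * cross2 q (P.vtx i) (P.vtx (i + 1)) < 0) :
    ∃ ε₀ > 0, ∀ ε : ℝ, 0 < ε → ε < ε₀ →
      ∃ a b : ZMod P.n, a ≠ b ∧ ({a, b} : Set (ZMod P.n)) = {i - 1, i} ∧
        a ∈ P.hits q (θ - ε) ∧ b ∉ P.hits q (θ - ε) ∧
        P.hits q (θ + ε) = insert b (P.hits q (θ - ε) \ {a}) ∧
        P.rank q (θ - ε) a = P.rank q (θ + ε) b := by
  obtain ⟨t, ht, hv⟩ := hstab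
  have ht : 0 < t :=
    ht.lt_of_ne fun h => P.vtx_ne_of_wgp hw i (by rw [hv, ← h, zero_smul, add_zero])
  obtain ⟨a, b, za, zb, hab, hpair, hea, heb, hza, hzb⟩ := P.exists_incident_edges hv hnc
  have hA := P.eventually_hits_eq_insert hw hv ht hpair hea heb (mul_neg_of_neg_of_pos hza hzb)
  have hB := P.eventually_hits_eq_insert hw hv ht (pair_comm b a ▸ hpair) heb hea
    (mul_neg_of_pos_of_neg hzb hza)
  obtain ⟨ε₀, hε₀, hε⟩ := exists_pos_forall_sub_add_of_eventually_nhds (hA.and hB)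
  refine ⟨ε₀, hε₀, fun ε h0 h1 => ?_⟩
  obtain ⟨⟨hA, -⟩, ⟨-, hB⟩⟩ := hε ε h0 h1
  obtain ⟨h₁, hord₁⟩ := hA (by rw [sub_sub_cancel]; exact mul_neg_of_pos_of_neg h0 hza)
  obtain ⟨h₂, hord₂⟩ :=
    hB (by rw [sub_add_cancel_left, neg_mul, neg_neg_iff_pos]; exact mul_pos h0 hzb)
  have hH : ∀ c ∈ ({a, b} : Set (ZMod P.n)), c ∉ P.hits q θ \ {i - 1, i} :=
    fun c hc h => h.2 (hpair ▸ hc)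
  exact ⟨a, b, hab, hpair, P.hits_swap_of_eq_insert hab (hH a (by simp)) (hH b (by simp)) h₁ h₂
    fun j hj => (hord₁ j hj).trans (hord₂ j hj).symm⟩

/-- Sweeping over a non-critical vertex `vtx i` (its incident edges lie on
opposite sides of the line `q`–`vtx i`): for all sufficiently small `ε > 0`, the
edge list of `r_{θ+ε}` is obtained from that of `r_{θ-ε}` by replacing one of
the two incident edges of the vertex by the other, at the same position in the
distance-ordered list. -/
theorem hits_swap_at_noncritical (P : SimplePolygon) (q : ℝ × ℝ)
    (hq : q ∈ P.inside) (hw : P.wgp q) (θ : ℝ) (i : ZMod P.n)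
    (hstab : P.vtx i ∈ rayFrom q θ)
    (hnc : cross2 q (P.vtx i) (P.vtx (i - 1)) * cross2 q (P.vtx i) (P.vtx (i + 1)) < 0) :
    ∃ ε₀ > 0, ∀ ε : ℝ, 0 < ε → ε < ε₀ →
      ∃ a b : ZMod P.n, a ≠ b ∧ ({a, b} : Set (ZMod P.n)) = {i - 1, i} ∧
        a ∈ P.hits q (θ - ε) ∧ b ∉ P.hits q (θ - ε) ∧
        P.hits q (θ + ε) = insert b (P.hits q (θ - ε) \ {a}) ∧
        P.rank q (θ - ε) a = P.rank q (θ + ε) b :=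
  hits_swap_at_noncritical_general P q hw θ i hstab hnc
end

section
/- Let v be a critical vertex of P stabbed by ray r_θ (both incident edges of v lie on the same side of r_θ). Then for sufficiently small ε > 0, the edge lists of r_{θ-ε} and r_{θ+ε} differ by exactly two consecutive edges: the two edges incident to v appear in exactly one of the two lists, and the remaining edges are identical in both lists. -/
open Set

open SimplePolygon
namespace SPAux
open SimplePolygon Filter

noncomputable def Gf (q : ℝ × ℝ) (φ : ℝ) (x : ℝ × ℝ) : ℝ :=
  Real.cos φ * (x.2 - q.2) - Real.sin φ * (x.1 - q.1)

noncomputable def Hf (q : ℝ × ℝ) (φ : ℝ) (x : ℝ × ℝ) : ℝ :=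
  Real.cos φ * (x.1 - q.1) + Real.sin φ * (x.2 - q.2)

noncomputable def tauF (q A B : ℝ × ℝ) (φ : ℝ) : ℝ :=
  (Gf q φ A * Hf q φ B - Gf q φ B * Hf q φ A) / (Gf q φ A - Gf q φ B)

lemma decomp (q : ℝ × ℝ) (φ : ℝ) (x : ℝ × ℝ) :
    q + (Hf q φ x) • dir φ + (Gf q φ x) • ((-Real.sin φ, Real.cos φ) : ℝ × ℝ) = x := by
  have h := Real.sin_sq_add_cos_sq φ
  have h1 : (q + (Hf q φ x) • dir φ + (Gf q φ x) • ((-Real.sin φ, Real.cos φ) : ℝ × ℝ)).1 = x.1 := by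
    simp only [Hf, Gf, dir, Prod.fst_add, Prod.smul_mk, smul_eq_mul]
    linear_combination (x.1 - q.1) * h
  have h2 : (q + (Hf q φ x) • dir φ + (Gf q φ x) • ((-Real.sin φ, Real.cos φ) : ℝ × ℝ)).2 = x.2 := by
    simp only [Hf, Gf, dir, Prod.snd_add, Prod.smul_mk, smul_eq_mul]
    linear_combination (x.2 - q.2) * h
  exact Prod.ext h1 h2

lemma Gf_ray (q : ℝ × ℝ) (φ t : ℝ) : Gf q φ (q + t • dir φ) = 0 := by
  simp only [Gf, dir, Prod.fst_add, Prod.snd_add, Prod.smul_mk, smul_eq_mul]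
  ring

lemma Hf_ray (q : ℝ × ℝ) (φ t : ℝ) : Hf q φ (q + t • dir φ) = t := by
  have h := Real.sin_sq_add_cos_sq φ
  simp only [Hf, dir, Prod.fst_add, Prod.snd_add, Prod.smul_mk, smul_eq_mul]
  linear_combination t * h

lemma Gf_v (q : ℝ × ℝ) (θ φ t : ℝ) : Gf q φ (q + t • dir θ) = t * Real.sin (θ - φ) := by
  simp only [Gf, dir, Prod.fst_add, Prod.snd_add, Prod.smul_mk, smul_eq_mul]
  rw [Real.sin_sub]; ring

lemma mem_ray_iff {q : ℝ × ℝ} {φ : ℝ} {x : ℝ × ℝ} :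
    x ∈ rayFrom q φ ↔ Gf q φ x = 0 ∧ 0 ≤ Hf q φ x := by
  constructor
  · rintro ⟨t, ht, rfl⟩
    simp [Gf_ray, Hf_ray, ht]
  · rintro ⟨hg, hh⟩
    refine ⟨Hf q φ x, hh, ?_⟩
    have d := decomp q φ x
    rw [hg, zero_smul, add_zero] at d
    exact d.symm

lemma Gf_comb {q : ℝ × ℝ} {φ : ℝ} {A B : ℝ × ℝ} {a b : ℝ} (hab : a + b = 1) :
    Gf q φ (a • A + b • B) = a * Gf q φ A + b * Gf q φ B := by
  have hb : b = 1 - a := by linarith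
  subst hb
  simp only [Gf, Prod.fst_add, Prod.snd_add, Prod.smul_fst, Prod.smul_snd, smul_eq_mul]
  ring

lemma Hf_comb {q : ℝ × ℝ} {φ : ℝ} {A B : ℝ × ℝ} {a b : ℝ} (hab : a + b = 1) :
    Hf q φ (a • A + b • B) = a * Hf q φ A + b * Hf q φ B := by
  have hb : b = 1 - a := by linarith
  subst hb
  simp only [Hf, Prod.fst_add, Prod.snd_add, Prod.smul_fst, Prod.smul_snd, smul_eq_mul]
  ring

lemma no_cross {q : ℝ × ℝ} {φ : ℝ} {A B : ℝ × ℝ} (h : 0 < Gf q φ A * Gf q φ B) :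
    ∀ x ∈ segment ℝ A B, Gf q φ x ≠ 0 := by
  rintro x ⟨a, b, ha, hb, hab, rfl⟩ hx
  rw [Gf_comb hab] at hx
  rcases mul_pos_iff.mp h with ⟨h1, h2⟩ | ⟨h1, h2⟩ <;> rcases ha.lt_or_eq with ha' | ha'
  · nlinarith [mul_pos ha' h1, mul_nonneg hb h2.le]
  · have hb1 : b = 1 := by linarith
    rw [← ha', hb1] at hx
    simp at hx
    linarith
  · nlinarith [mul_neg_of_pos_of_neg ha' h1, mul_nonpos_of_nonneg_of_nonpos hb h2.le]
  · have hb1 : b = 1 := by linarith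
    rw [← ha', hb1] at hx
    simp at hx
    linarith

lemma cross_pack {q : ℝ × ℝ} {φ : ℝ} {A B : ℝ × ℝ} (hop : Gf q φ A * Gf q φ B < 0) :
    ∃ x, x ∈ segment ℝ A B ∧ Gf q φ x = 0 ∧ Hf q φ x = tauF q A B φ ∧
      ∀ y ∈ segment ℝ A B, Gf q φ y = 0 → y = x := by
  set g := Gf q φ A with hg
  set g' := Gf q φ B with hg'
  have hne : g - g' ≠ 0 := by
    intro h
    have hgg : g = g' := by linarith
    rw [← hgg] at hop
    nlinarith [mul_self_nonneg g]
  set s := g / (g - g') with hs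
  have hs0 : 0 ≤ s ∧ s ≤ 1 := by
    rcases mul_neg_iff.mp hop with ⟨h1, h2⟩ | ⟨h1, h2⟩
    · constructor
      · exact div_nonneg h1.le (by linarith)
      · rw [hs, div_le_one (by linarith)]; linarith
    · constructor
      · rw [hs, div_nonneg_iff]; exact Or.inr ⟨h1.le, by linarith⟩
      · rw [hs, div_le_one_iff]; exact Or.inr (Or.inr ⟨by linarith, by linarith⟩)
  refine ⟨(1 - s) • A + s • B, ⟨1 - s, s, by linarith [hs0.2], hs0.1, by ring, rfl⟩, ?_, ?_, ?_⟩
  · rw [Gf_comb (by ring : (1 - s) + s = 1), ← hg, ← hg', hs]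
    field_simp
    ring
  · rw [Hf_comb (by ring : (1 - s) + s = 1), tauF, ← hg, ← hg', hs]
    field_simp
    ring
  · rintro y ⟨a, b, ha, hb, hab, rfl⟩ hy
    rw [Gf_comb hab, ← hg, ← hg'] at hy
    have ha' : a = 1 - b := by linarith
    have hbs : b = s := by
      rw [hs, eq_div_iff hne]
      rw [ha'] at hy
      linear_combination -hy
    have haa : a = 1 - s := by rw [ha', hbs]
    rw [haa, hbs]

lemma not_hits_of_same {P : SimplePolygon} {q : ℝ × ℝ} {φ : ℝ} {j : ZMod P.n}
    (h : 0 < Gf q φ (P.vtx j) * Gf q φ (P.vtx (j + 1))) : j ∉ P.hits q φ := by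
  rintro ⟨x, hray, hedge⟩
  simp only [SimplePolygon.edge] at hedge
  exact no_cross h x hedge (mem_ray_iff.mp hray).1

lemma hits_iff_cross {P : SimplePolygon} {q : ℝ × ℝ} {φ : ℝ} {j : ZMod P.n}
    (hop : Gf q φ (P.vtx j) * Gf q φ (P.vtx (j + 1)) < 0) :
    j ∈ P.hits q φ ↔ 0 ≤ tauF q (P.vtx j) (P.vtx (j + 1)) φ := by
  obtain ⟨x₀, hx0seg, hx0g, hx0h, huniq⟩ := cross_pack hop
  constructor
  · rintro ⟨x, hray, hedge⟩
    simp only [SimplePolygon.edge] at hedge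
    obtain ⟨hg, hh⟩ := mem_ray_iff.mp hray
    rw [← hx0h, ← huniq x hedge hg]
    exact hh
  · intro hτ
    exact ⟨x₀, mem_ray_iff.mpr ⟨hx0g, by rw [hx0h]; exact hτ⟩, hx0seg⟩

lemma hitTime_spec {P : SimplePolygon} {q : ℝ × ℝ} {φ : ℝ} {j : ZMod P.n}
    (hop : Gf q φ (P.vtx j) * Gf q φ (P.vtx (j + 1)) < 0)
    (hτ : 0 ≤ tauF q (P.vtx j) (P.vtx (j + 1)) φ) :
    P.hitTime q φ j = tauF q (P.vtx j) (P.vtx (j + 1)) φ ∧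
      q + (tauF q (P.vtx j) (P.vtx (j + 1)) φ) • dir φ ∈ P.edge j := by
  obtain ⟨x₀, hx0seg, hx0g, hx0h, huniq⟩ := cross_pack hop
  set τ := tauF q (P.vtx j) (P.vtx (j + 1)) φ with hτdef
  have hx0 : q + τ • dir φ = x₀ := by
    have d := decomp q φ x₀
    rw [hx0g, zero_smul, add_zero, hx0h] at d
    exact d
  have hmem : q + τ • dir φ ∈ P.edge j := by
    rw [hx0]; exact hx0seg
  refine ⟨?_, hmem⟩
  have hset : {t : ℝ | 0 ≤ t ∧ q + t • dir φ ∈ P.edge j} = {τ} := by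
    ext u
    simp only [Set.mem_setOf_eq, Set.mem_singleton_iff]
    constructor
    · rintro ⟨hu0, hu⟩
      simp only [SimplePolygon.edge] at hu
      have hux := huniq _ hu (Gf_ray q φ u)
      have := congrArg (Hf q φ) hux
      rwa [Hf_ray, hx0h] at this
    · rintro rfl
      exact ⟨hτ, hmem⟩
  simp only [SimplePolygon.hitTime]
  rw [hset, csInf_singleton]

lemma contGf (q x : ℝ × ℝ) : Continuous fun φ => Gf q φ x := by
  unfold Gf; fun_prop

lemma contHf (q x : ℝ × ℝ) : Continuous fun φ => Hf q φ x := by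
  unfold Hf; fun_prop

lemma contTau {q A B : ℝ × ℝ} {θ : ℝ} (h : Gf q θ A - Gf q θ B ≠ 0) :
    ContinuousAt (tauF q A B) θ := by
  unfold tauF
  exact ContinuousAt.div
    ((((contGf q A).mul (contHf q B)).sub ((contGf q B).mul (contHf q A))).continuousAt)
    (((contGf q A).sub (contGf q B)).continuousAt) h

lemma collinear_of_G_zero {q v x : ℝ × ℝ} {θ t : ℝ} (hv : v = q + t • dir θ)
    (hx : Gf q θ x = 0) : Collinear ℝ ({q, v, x} : Set (ℝ × ℝ)) := by
  apply (collinear_iff_of_mem (Set.mem_insert q _)).mpr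
  refine ⟨dir θ, ?_⟩
  intro p hp
  rcases hp with rfl | hp
  · exact ⟨0, by simp⟩
  rcases hp with rfl | hp
  · exact ⟨t, by rw [vadd_eq_add]; exact hv.trans (add_comm _ _)⟩
  rcases hp with rfl
  refine ⟨Hf q θ p, ?_⟩
  have d := decomp q θ p
  rw [hx, zero_smul, add_zero] at d
  rw [vadd_eq_add]
  exact d.symm.trans (add_comm _ _)

lemma cross2_eq {q : ℝ × ℝ} {θ t : ℝ} (x : ℝ × ℝ) :
    cross2 q (q + t • dir θ) x = t * Gf q θ x := by
  simp only [cross2, Gf, dir, Prod.fst_add, Prod.snd_add, Prod.smul_mk, smul_eq_mul]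
  ring

end SPAux

open SPAux Filter


/-- Sweeping over a critical vertex `vtx i`: for all sufficiently small `ε > 0`,
the edge lists of `r_{θ-ε}` and `r_{θ+ε}` differ in exactly the two edges
incident to the vertex, which appear consecutively (adjacent ranks) in exactly
one of the two lists, all remaining edges being common to both lists. -/
theorem hits_diff_at_critical (P : SimplePolygon) (q : ℝ × ℝ)
    (hq : q ∈ P.inside) (hw : P.wgp q) (θ : ℝ) (i : ZMod P.n)
    (hstab : P.vtx i ∈ rayFrom q θ) (hc : P.isCritical q i) :
    ∃ ε₀ > 0, ∀ ε : ℝ, 0 < ε → ε < ε₀ →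
      Xor'
        (({i - 1, i} : Set (ZMod P.n)) ⊆ P.hits q (θ - ε) ∧
          P.hits q (θ + ε) = P.hits q (θ - ε) \ {i - 1, i} ∧
          (P.rank q (θ - ε) (i - 1) = P.rank q (θ - ε) i + 1 ∨
            P.rank q (θ - ε) i = P.rank q (θ - ε) (i - 1) + 1))
        (({i - 1, i} : Set (ZMod P.n)) ⊆ P.hits q (θ + ε) ∧
          P.hits q (θ - ε) = P.hits q (θ + ε) \ {i - 1, i} ∧
          (P.rank q (θ + ε) (i - 1) = P.rank q (θ + ε) i + 1 ∨
            P.rank q (θ + ε) i = P.rank q (θ + ε) (i - 1) + 1)) := by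
  classical
  haveI : NeZero P.n := ⟨by have := P.three_le; omega⟩
  haveI : Fact (1 < P.n) := ⟨by have := P.three_le; omega⟩
  obtain ⟨t, ht0, hv⟩ := hstab
  have hqb : q ∉ P.boundary := hq.1
  have hvedge : P.vtx i ∈ P.edge i := left_mem_segment ℝ _ _
  have htpos : 0 < t := by
    rcases ht0.lt_or_eq with h | h
    · exact h
    · exfalso
      apply hqb
      refine Set.mem_iUnion.mpr ⟨i, ?_⟩
      have hqi : P.vtx i = q := by rw [hv, ← h, zero_smul, add_zero]
      rw [← hqi]
      exact hvedge
  -- index facts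
  have h1ne : (i - 1 : ZMod P.n) ≠ i := by
    intro h
    have h2 : i + 0 = i + 1 := by
      rw [add_zero]
      conv_lhs => rw [← sub_add_cancel i 1]
      rw [h]
    exact one_ne_zero (add_left_cancel h2).symm
  have hi1ne : (i + 1 : ZMod P.n) ≠ i := by
    intro h
    have h2 : i + 1 = i + 0 := by rw [add_zero]; exact h
    exact one_ne_zero (add_left_cancel h2)
  have hio : (i - 1) + 1 = i := sub_add_cancel i 1
  -- wgp consequences
  have hGne : ∀ j : ZMod P.n, j ≠ i → Gf q θ (P.vtx j) ≠ 0 := by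
    intro j hj hG
    exact hw i j (Ne.symm hj) (collinear_of_G_zero hv hG)
  -- the sign σ
  have hcr : (0:ℝ) < cross2 q (P.vtx i) (P.vtx (i - 1)) * cross2 q (P.vtx i) (P.vtx (i + 1)) := hc
  rw [hv, cross2_eq, cross2_eq] at hcr
  obtain ⟨σ, hσ1, hn1, hn2⟩ : ∃ σ : ℝ, (σ = 1 ∨ σ = -1) ∧
      0 < σ * Gf q θ (P.vtx (i - 1)) ∧ 0 < σ * Gf q θ (P.vtx (i + 1)) := by
    rcases mul_pos_iff.mp hcr with ⟨h1, h2⟩ | ⟨h1, h2⟩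
    · exact ⟨1, Or.inl rfl, by nlinarith, by nlinarith⟩
    · exact ⟨-1, Or.inr rfl, by nlinarith, by nlinarith⟩
  have hσsq : σ * σ = 1 := by rcases hσ1 with rfl | rfl <;> norm_num
  have hsinσ : ∀ ε : ℝ, Real.sin (σ * ε) = σ * Real.sin ε := by
    intro ε
    rcases hσ1 with rfl | rfl
    · rw [one_mul, one_mul]
    · rw [neg_one_mul, neg_one_mul, Real.sin_neg]
  -- G and H values at the stabbed vertex
  have hGvφ : ∀ φ : ℝ, Gf q φ (P.vtx i) = t * Real.sin (θ - φ) := by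
    intro φ; rw [hv]; exact Gf_v q θ φ t
  have hGvθ : Gf q θ (P.vtx i) = 0 := by rw [hGvφ, sub_self, Real.sin_zero, mul_zero]
  have hHvθ : Hf q θ (P.vtx i) = t := by rw [hv]; exact Hf_ray q θ t
  have hGA1 : Gf q θ (P.vtx (i - 1)) ≠ 0 := hGne _ h1ne
  have hGB1 : Gf q θ (P.vtx (i + 1)) ≠ 0 := hGne _ hi1ne
  -- tau values at θ for the incident edges
  have hT1θ : tauF q (P.vtx (i - 1)) (P.vtx i) θ = t := by
    unfold tauF
    rw [hGvθ, hHvθ, zero_mul, sub_zero, sub_zero, mul_div_cancel_left₀ _ hGA1]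
  have hT2θ : tauF q (P.vtx i) (P.vtx (i + 1)) θ = t := by
    unfold tauF
    rw [hGvθ, hHvθ, zero_mul, zero_sub, zero_sub, neg_div_neg_eq,
      mul_div_cancel_left₀ _ hGB1]
  have hcT1 : ContinuousAt (tauF q (P.vtx (i - 1)) (P.vtx i)) θ :=
    contTau (by rw [hGvθ, sub_zero]; exact hGA1)
  have hcT2 : ContinuousAt (tauF q (P.vtx i) (P.vtx (i + 1))) θ :=
    contTau (by rw [hGvθ, zero_sub]; exact neg_ne_zero.mpr hGB1)
  -- filter setup
  set l := nhdsWithin (0:ℝ) (Set.Ioi 0) with hl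
  have hφp : Tendsto (fun ε : ℝ => θ + σ * ε) l (nhds θ) := by
    have hco : Continuous fun ε : ℝ => θ + σ * ε := by fun_prop
    have h0 := hco.tendsto 0
    simp only [mul_zero, add_zero] at h0
    exact h0.mono_left nhdsWithin_le_nhds
  have hφm : Tendsto (fun ε : ℝ => θ - σ * ε) l (nhds θ) := by
    have hco : Continuous fun ε : ℝ => θ - σ * ε := by fun_prop
    have h0 := hco.tendsto 0
    simp only [mul_zero, sub_zero] at h0
    exact h0.mono_left nhdsWithin_le_nhds
  have tdGp : ∀ x : ℝ × ℝ, Tendsto (fun ε => Gf q (θ + σ * ε) x) l (nhds (Gf q θ x)) :=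
    fun x => ((contGf q x).tendsto θ).comp hφp
  have tdGm : ∀ x : ℝ × ℝ, Tendsto (fun ε => Gf q (θ - σ * ε) x) l (nhds (Gf q θ x)) :=
    fun x => ((contGf q x).tendsto θ).comp hφm
  have tdT1 : Tendsto (fun ε => tauF q (P.vtx (i - 1)) (P.vtx i) (θ + σ * ε)) l (nhds t) := by
    have := hcT1.tendsto.comp hφp
    rwa [hT1θ] at this
  have tdT2 : Tendsto (fun ε => tauF q (P.vtx i) (P.vtx (i + 1)) (θ + σ * ε)) l (nhds t) := by
    have := hcT2.tendsto.comp hφp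
    rwa [hT2θ] at this
  -- central eventualities
  have ev0 : ∀ᶠ ε : ℝ in l, 0 < ε ∧ ε < Real.pi := by
    have : Set.Ioo (0:ℝ) Real.pi ∈ l := Ioo_mem_nhdsGT_of_mem (Set.left_mem_Ico.mpr Real.pi_pos)
    filter_upwards [this] with ε hε
    exact ⟨hε.1, hε.2⟩
  have evA1 : ∀ᶠ ε : ℝ in l, 0 < σ * Gf q (θ + σ * ε) (P.vtx (i - 1)) :=
    tendsto_const_nhds.eventually_lt (tendsto_const_nhds.mul (tdGp (P.vtx (i - 1)))) hn1
  have evA2 : ∀ᶠ ε : ℝ in l, 0 < σ * Gf q (θ + σ * ε) (P.vtx (i + 1)) :=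
    tendsto_const_nhds.eventually_lt (tendsto_const_nhds.mul (tdGp (P.vtx (i + 1)))) hn2
  have evB1 : ∀ᶠ ε : ℝ in l, 0 < σ * Gf q (θ - σ * ε) (P.vtx (i - 1)) :=
    tendsto_const_nhds.eventually_lt (tendsto_const_nhds.mul (tdGm (P.vtx (i - 1)))) hn1
  have evB2 : ∀ᶠ ε : ℝ in l, 0 < σ * Gf q (θ - σ * ε) (P.vtx (i + 1)) :=
    tendsto_const_nhds.eventually_lt (tendsto_const_nhds.mul (tdGm (P.vtx (i + 1)))) hn2
  have evT1 : ∀ᶠ ε : ℝ in l, 0 < tauF q (P.vtx (i - 1)) (P.vtx i) (θ + σ * ε) :=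
    tendsto_const_nhds.eventually_lt tdT1 htpos
  have evT2 : ∀ᶠ ε : ℝ in l, 0 < tauF q (P.vtx i) (P.vtx (i + 1)) (θ + σ * ε) :=
    tendsto_const_nhds.eventually_lt tdT2 htpos
  -- per-other-edge eventualities
  have hallj : ∀ᶠ ε : ℝ in l, ∀ j : ZMod P.n, j ≠ i - 1 → j ≠ i →
      ((j ∈ P.hits q (θ + σ * ε) ↔ j ∈ P.hits q (θ - σ * ε)) ∧
       (j ∈ P.hits q (θ + σ * ε) →
         ((P.hitTime q (θ + σ * ε) j < tauF q (P.vtx (i - 1)) (P.vtx i) (θ + σ * ε) ∧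
           P.hitTime q (θ + σ * ε) j < tauF q (P.vtx i) (P.vtx (i + 1)) (θ + σ * ε)) ∨
          (tauF q (P.vtx (i - 1)) (P.vtx i) (θ + σ * ε) < P.hitTime q (θ + σ * ε) j ∧
           tauF q (P.vtx i) (P.vtx (i + 1)) (θ + σ * ε) < P.hitTime q (θ + σ * ε) j)))) := by
    rw [eventually_all]
    intro j
    by_cases hj1 : j = i - 1
    · exact Eventually.of_forall fun ε h1 h2 => absurd hj1 h1
    by_cases hj2 : j = i
    · exact Eventually.of_forall fun ε h1 h2 => absurd hj2 h2
    have hjA : Gf q θ (P.vtx j) ≠ 0 := hGne _ hj2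
    have hj1' : j + 1 ≠ i := fun h => hj1 (eq_sub_of_add_eq h)
    have hjB : Gf q θ (P.vtx (j + 1)) ≠ 0 := hGne _ hj1'
    rcases lt_or_gt_of_ne (mul_ne_zero hjA hjB) with hneg | hpos
    · -- edge j crosses the line through q, vtx i
      have hden : Gf q θ (P.vtx j) - Gf q θ (P.vtx (j + 1)) ≠ 0 := by
        intro h
        have hgg : Gf q θ (P.vtx j) = Gf q θ (P.vtx (j + 1)) := by linarith
        rw [← hgg] at hneg
        nlinarith [mul_self_nonneg (Gf q θ (P.vtx j))]
      have tdτ : Tendsto (fun ε => tauF q (P.vtx j) (P.vtx (j + 1)) (θ + σ * ε)) l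
          (nhds (tauF q (P.vtx j) (P.vtx (j + 1)) θ)) := (contTau hden).tendsto.comp hφp
      have tdτm : Tendsto (fun ε => tauF q (P.vtx j) (P.vtx (j + 1)) (θ - σ * ε)) l
          (nhds (tauF q (P.vtx j) (P.vtx (j + 1)) θ)) := (contTau hden).tendsto.comp hφm
      have evpp : ∀ᶠ ε : ℝ in l,
          Gf q (θ + σ * ε) (P.vtx j) * Gf q (θ + σ * ε) (P.vtx (j + 1)) < 0 :=
        ((tdGp (P.vtx j)).mul (tdGp (P.vtx (j + 1)))).eventually_lt tendsto_const_nhds hneg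
      have evpm : ∀ᶠ ε : ℝ in l,
          Gf q (θ - σ * ε) (P.vtx j) * Gf q (θ - σ * ε) (P.vtx (j + 1)) < 0 :=
        ((tdGm (P.vtx j)).mul (tdGm (P.vtx (j + 1)))).eventually_lt tendsto_const_nhds hneg
      obtain ⟨x₀, hseg, hg0, hh0, _⟩ := cross_pack hneg
      have hτne0 : tauF q (P.vtx j) (P.vtx (j + 1)) θ ≠ 0 := by
        intro h0
        have d := decomp q θ x₀
        rw [hg0, zero_smul, add_zero, hh0, h0, zero_smul, add_zero] at d
        apply hqb
        refine Set.mem_iUnion.mpr ⟨j, ?_⟩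
        rw [d]
        simp only [SimplePolygon.edge]
        exact hseg
      have hτnet : tauF q (P.vtx j) (P.vtx (j + 1)) θ ≠ t := by
        intro h0
        have d := decomp q θ x₀
        rw [hg0, zero_smul, add_zero, hh0, h0, ← hv] at d
        -- d : P.vtx i = x₀ ∈ segment (vtx j) (vtx (j+1))
        have hvin : P.vtx i ∈ segment ℝ (P.vtx j) (P.vtx (j + 1)) := by rw [d]; exact hseg
        by_cases hji : j = i + 1
        · subst hji
          have hmem : P.vtx i ∈ segment ℝ (P.vtx i) (P.vtx (i + 1)) ∩
              segment ℝ (P.vtx (i + 1)) (P.vtx (i + 1 + 1)) :=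
            ⟨left_mem_segment ℝ _ _, hvin⟩
          rw [P.consecutive i] at hmem
          exact hi1ne (P.inj hmem.symm)
        · have hdisj := P.nondegenerate i j (Ne.symm hj2) (fun h => hji h.symm) hj1'
          have : P.vtx i ∈ segment ℝ (P.vtx i) (P.vtx (i + 1)) ∩
              segment ℝ (P.vtx j) (P.vtx (j + 1)) := ⟨left_mem_segment ℝ _ _, hvin⟩
          rw [hdisj] at this
          exact this
      rcases lt_or_gt_of_ne hτne0 with hτneg | hτpos
      · -- crosses behind q : never hit
        have ev1 : ∀ᶠ ε : ℝ in l, tauF q (P.vtx j) (P.vtx (j + 1)) (θ + σ * ε) < 0 :=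
          tdτ.eventually_lt tendsto_const_nhds hτneg
        have ev2 : ∀ᶠ ε : ℝ in l, tauF q (P.vtx j) (P.vtx (j + 1)) (θ - σ * ε) < 0 :=
          tdτm.eventually_lt tendsto_const_nhds hτneg
        filter_upwards [evpp, evpm, ev1, ev2] with ε hpp hpm h1 h2 _ _
        constructor
        · exact iff_of_false (fun hm => absurd ((hits_iff_cross hpp).mp hm) (not_le.mpr h1))
            (fun hm => absurd ((hits_iff_cross hpm).mp hm) (not_le.mpr h2))
        · intro hm
          exact absurd ((hits_iff_cross hpp).mp hm) (not_le.mpr h1)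
      · -- crossed ahead of q : always hit, with stable relative position
        have ev1 : ∀ᶠ ε : ℝ in l, 0 < tauF q (P.vtx j) (P.vtx (j + 1)) (θ + σ * ε) :=
          tendsto_const_nhds.eventually_lt tdτ hτpos
        have ev2 : ∀ᶠ ε : ℝ in l, 0 < tauF q (P.vtx j) (P.vtx (j + 1)) (θ - σ * ε) :=
          tendsto_const_nhds.eventually_lt tdτm hτpos
        have evcmp : ∀ᶠ ε : ℝ in l,
            ((tauF q (P.vtx j) (P.vtx (j + 1)) (θ + σ * ε) <
                tauF q (P.vtx (i - 1)) (P.vtx i) (θ + σ * ε) ∧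
              tauF q (P.vtx j) (P.vtx (j + 1)) (θ + σ * ε) <
                tauF q (P.vtx i) (P.vtx (i + 1)) (θ + σ * ε)) ∨
             (tauF q (P.vtx (i - 1)) (P.vtx i) (θ + σ * ε) <
                tauF q (P.vtx j) (P.vtx (j + 1)) (θ + σ * ε) ∧
              tauF q (P.vtx i) (P.vtx (i + 1)) (θ + σ * ε) <
                tauF q (P.vtx j) (P.vtx (j + 1)) (θ + σ * ε))) := by
          rcases lt_or_gt_of_ne hτnet with hlt | hgt
          · filter_upwards [tdτ.eventually_lt tdT1 hlt, tdτ.eventually_lt tdT2 hlt] with ε e1 e2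
            exact Or.inl ⟨e1, e2⟩
          · filter_upwards [tdT1.eventually_lt tdτ hgt, tdT2.eventually_lt tdτ hgt] with ε e1 e2
            exact Or.inr ⟨e1, e2⟩
        filter_upwards [evpp, evpm, ev1, ev2, evcmp] with ε hpp hpm h1 h2 hcmp _ _
        constructor
        · exact iff_of_true ((hits_iff_cross hpp).mpr h1.le) ((hits_iff_cross hpm).mpr h2.le)
        · intro _
          rw [(hitTime_spec hpp h1.le).1]
          exact hcmp
    · -- edge j entirely on one side of the line : never hit
      have evpp : ∀ᶠ ε : ℝ in l,
          0 < Gf q (θ + σ * ε) (P.vtx j) * Gf q (θ + σ * ε) (P.vtx (j + 1)) :=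
        tendsto_const_nhds.eventually_lt ((tdGp (P.vtx j)).mul (tdGp (P.vtx (j + 1)))) hpos
      have evpm : ∀ᶠ ε : ℝ in l,
          0 < Gf q (θ - σ * ε) (P.vtx j) * Gf q (θ - σ * ε) (P.vtx (j + 1)) :=
        tendsto_const_nhds.eventually_lt ((tdGm (P.vtx j)).mul (tdGm (P.vtx (j + 1)))) hpos
      filter_upwards [evpp, evpm] with ε hpp hpm _ _
      constructor
      · exact iff_of_false (not_hits_of_same hpp) (not_hits_of_same hpm)
      · intro hm
        exact absurd hm (not_hits_of_same hpp)
  -- the grand eventuality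
  have hfinal : ∀ᶠ ε : ℝ in l,
      Xor'
        (({i - 1, i} : Set (ZMod P.n)) ⊆ P.hits q (θ - ε) ∧
          P.hits q (θ + ε) = P.hits q (θ - ε) \ {i - 1, i} ∧
          (P.rank q (θ - ε) (i - 1) = P.rank q (θ - ε) i + 1 ∨
            P.rank q (θ - ε) i = P.rank q (θ - ε) (i - 1) + 1))
        (({i - 1, i} : Set (ZMod P.n)) ⊆ P.hits q (θ + ε) ∧
          P.hits q (θ - ε) = P.hits q (θ + ε) \ {i - 1, i} ∧
          (P.rank q (θ + ε) (i - 1) = P.rank q (θ + ε) i + 1 ∨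
            P.rank q (θ + ε) i = P.rank q (θ + ε) (i - 1) + 1)) := by
    filter_upwards [ev0, evA1, evA2, evB1, evB2, evT1, evT2, hallj] with ε hε hA1 hA2 hB1 hB2
      hτ1 hτ2 hJ
    have hsin : 0 < Real.sin ε := Real.sin_pos_of_pos_of_lt_pi hε.1 hε.2
    -- sign of G at the stabbed vertex on the two perturbed rays
    have hGvp : Gf q (θ + σ * ε) (P.vtx i) = -(σ * (t * Real.sin ε)) := by
      rw [hGvφ, show θ - (θ + σ * ε) = -(σ * ε) by ring, Real.sin_neg, hsinσ]
      ring
    have hGvm : Gf q (θ - σ * ε) (P.vtx i) = σ * (t * Real.sin ε) := by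
      rw [hGvφ, show θ - (θ - σ * ε) = σ * ε by ring, hsinσ]
      ring
    have hσGvp : σ * Gf q (θ + σ * ε) (P.vtx i) < 0 := by
      rw [hGvp]
      nlinarith [hσsq, mul_pos htpos hsin]
    have hσGvm : 0 < σ * Gf q (θ - σ * ε) (P.vtx i) := by
      rw [hGvm]
      nlinarith [hσsq, mul_pos htpos hsin]
    -- products for the incident edges
    have mulid : ∀ a b : ℝ, a * b = (σ * a) * (σ * b) := by
      intro a b
      linear_combination (-(a * b)) * hσsq
    have hprod1p : Gf q (θ + σ * ε) (P.vtx (i - 1)) * Gf q (θ + σ * ε) (P.vtx ((i-1) + 1)) < 0 := by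
      rw [hio, mulid]
      exact mul_neg_of_pos_of_neg hA1 hσGvp
    have hprod2p : Gf q (θ + σ * ε) (P.vtx i) * Gf q (θ + σ * ε) (P.vtx (i + 1)) < 0 := by
      rw [mulid]
      exact mul_neg_of_neg_of_pos hσGvp hA2
    have hprod1m : 0 < Gf q (θ - σ * ε) (P.vtx (i - 1)) * Gf q (θ - σ * ε) (P.vtx ((i-1) + 1)) := by
      rw [hio, mulid]
      exact mul_pos hB1 hσGvm
    have hprod2m : 0 < Gf q (θ - σ * ε) (P.vtx i) * Gf q (θ - σ * ε) (P.vtx (i + 1)) := by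
      rw [mulid]
      exact mul_pos hσGvm hB2
    -- rewrite the tau expressions to match `hits_iff_cross` forms for edge i-1
    have hio' : P.vtx ((i - 1) + 1) = P.vtx i := by rw [hio]
    -- membership facts
    have h1memp : (i - 1) ∈ P.hits q (θ + σ * ε) := by
      refine (hits_iff_cross hprod1p).mpr ?_
      rw [hio']
      exact hτ1.le
    have h2memp : i ∈ P.hits q (θ + σ * ε) := (hits_iff_cross hprod2p).mpr hτ2.le
    have h1memm : (i - 1) ∉ P.hits q (θ - σ * ε) := not_hits_of_same hprod1m
    have h2memm : i ∉ P.hits q (θ - σ * ε) := not_hits_of_same hprod2m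
    -- hit times of the incident edges
    have hspec1 := hitTime_spec hprod1p (by rw [hio']; exact hτ1.le)
    have hspec2 := hitTime_spec hprod2p hτ2.le
    have hT1e : P.hitTime q (θ + σ * ε) (i - 1) = tauF q (P.vtx (i - 1)) (P.vtx i) (θ + σ * ε) := by
      rw [hspec1.1, hio']
    have hT2e : P.hitTime q (θ + σ * ε) i = tauF q (P.vtx i) (P.vtx (i + 1)) (θ + σ * ε) :=
      hspec2.1
    -- the two incident hit times are distinct
    have hTne : P.hitTime q (θ + σ * ε) (i - 1) ≠ P.hitTime q (θ + σ * ε) i := by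
      intro he
      have hp1 := hspec1.2
      have hp2 := hspec2.2
      rw [hio'] at hp1
      rw [← hT1e, he, hT2e] at hp1
      -- common point of both incident edges
      have hmem : q + (tauF q (P.vtx i) (P.vtx (i + 1)) (θ + σ * ε)) • dir (θ + σ * ε) ∈
          segment ℝ (P.vtx (i - 1)) (P.vtx ((i - 1) + 1)) ∩
          segment ℝ (P.vtx ((i - 1) + 1)) (P.vtx ((i - 1) + 1 + 1)) := by
        constructor
        · exact hp1
        · rw [hio]
          exact hp2
      rw [P.consecutive (i - 1)] at hmem
      rw [hio] at hmem
      -- so vtx i lies on the perturbed ray : contradiction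
      have : Gf q (θ + σ * ε) (P.vtx i) = 0 := by
        rw [← hmem]
        exact Gf_ray q _ _
      rw [this, mul_zero] at hσGvp
      exact lt_irrefl 0 hσGvp
    -- hits sets
    have hsets : P.hits q (θ - σ * ε) = P.hits q (θ + σ * ε) \ {i - 1, i} := by
      ext j
      by_cases hj1 : j = i - 1
      · subst hj1
        simp only [Set.mem_diff, Set.mem_insert_iff, Set.mem_singleton_iff]
        exact iff_of_false h1memm (fun h => h.2 (by simp))
      by_cases hj2 : j = i
      · subst hj2
        simp only [Set.mem_diff, Set.mem_insert_iff, Set.mem_singleton_iff]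
        exact iff_of_false h2memm (fun h => h.2 (by simp))
      · have hiff := (hJ j hj1 hj2).1
        simp only [Set.mem_diff, Set.mem_insert_iff, Set.mem_singleton_iff]
        constructor
        · intro h
          exact ⟨hiff.mpr h, fun hor => hor.elim hj1 hj2⟩
        · intro h
          exact hiff.mp h.1
    have hsubset : ({i - 1, i} : Set (ZMod P.n)) ⊆ P.hits q (θ + σ * ε) := by
      intro j hj
      rcases hj with rfl | hj
      · exact h1memp
      · rw [Set.mem_singleton_iff] at hj
        subst hj
        exact h2memp
    -- ranks
    have hrank : P.rank q (θ + σ * ε) (i - 1) = P.rank q (θ + σ * ε) i + 1 ∨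
        P.rank q (θ + σ * ε) i = P.rank q (θ + σ * ε) (i - 1) + 1 := by
      have key : ∀ j : ZMod P.n, j ≠ i - 1 → j ≠ i → j ∈ P.hits q (θ + σ * ε) →
          (P.hitTime q (θ + σ * ε) j < P.hitTime q (θ + σ * ε) (i - 1) ∧
           P.hitTime q (θ + σ * ε) j < P.hitTime q (θ + σ * ε) i) ∨
          (P.hitTime q (θ + σ * ε) (i - 1) < P.hitTime q (θ + σ * ε) j ∧
           P.hitTime q (θ + σ * ε) i < P.hitTime q (θ + σ * ε) j) := by
        intro j hj1 hj2 hjm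
        rw [hT1e, hT2e]
        exact (hJ j hj1 hj2).2 hjm
      rcases lt_or_gt_of_ne hTne with hlt | hgt
      · right
        have hseteq : {j | j ∈ P.hits q (θ + σ * ε) ∧
              P.hitTime q (θ + σ * ε) j < P.hitTime q (θ + σ * ε) i} =
            insert (i - 1) {j | j ∈ P.hits q (θ + σ * ε) ∧
              P.hitTime q (θ + σ * ε) j < P.hitTime q (θ + σ * ε) (i - 1)} := by
          ext j
          simp only [Set.mem_setOf_eq, Set.mem_insert_iff]
          constructor
          · rintro ⟨hjh, hjt⟩
            by_cases hj1 : j = i - 1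
            · exact Or.inl hj1
            by_cases hj2 : j = i
            · subst hj2; exact absurd hjt (lt_irrefl _)
            rcases key j hj1 hj2 hjh with ⟨e1, _⟩ | ⟨_, e2⟩
            · exact Or.inr ⟨hjh, e1⟩
            · exact absurd hjt (not_lt.mpr e2.le)
          · rintro (rfl | ⟨hjh, hjt⟩)
            · exact ⟨h1memp, hlt⟩
            · exact ⟨hjh, lt_trans hjt hlt⟩
        have hnm : (i - 1) ∉ {j | j ∈ P.hits q (θ + σ * ε) ∧
            P.hitTime q (θ + σ * ε) j < P.hitTime q (θ + σ * ε) (i - 1)} := by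
          rintro ⟨_, h⟩
          exact lt_irrefl _ h
        simp only [SimplePolygon.rank]
        rw [hseteq, Set.ncard_insert_of_notMem hnm (Set.toFinite _)]
      · left
        have hseteq : {j | j ∈ P.hits q (θ + σ * ε) ∧
              P.hitTime q (θ + σ * ε) j < P.hitTime q (θ + σ * ε) (i - 1)} =
            insert i {j | j ∈ P.hits q (θ + σ * ε) ∧
              P.hitTime q (θ + σ * ε) j < P.hitTime q (θ + σ * ε) i} := by
          ext j
          simp only [Set.mem_setOf_eq, Set.mem_insert_iff]
          constructor
          · rintro ⟨hjh, hjt⟩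
            by_cases hj2 : j = i
            · exact Or.inl hj2
            by_cases hj1 : j = i - 1
            · subst hj1; exact absurd hjt (lt_irrefl _)
            rcases key j hj1 hj2 hjh with ⟨_, e1⟩ | ⟨e2, _⟩
            · exact Or.inr ⟨hjh, e1⟩
            · exact absurd hjt (not_lt.mpr e2.le)
          · rintro (rfl | ⟨hjh, hjt⟩)
            · exact ⟨h2memp, hgt⟩
            · exact ⟨hjh, lt_trans hjt hgt⟩
        have hnm : i ∉ {j | j ∈ P.hits q (θ + σ * ε) ∧
            P.hitTime q (θ + σ * ε) j < P.hitTime q (θ + σ * ε) i} := by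
          rintro ⟨_, h⟩
          exact lt_irrefl _ h
        simp only [SimplePolygon.rank]
        rw [hseteq, Set.ncard_insert_of_notMem hnm (Set.toFinite _)]
    -- conclude, splitting on σ
    rcases hσ1 with rfl | rfl
    · rw [show θ + 1 * ε = θ + ε by ring] at hsubset hsets hrank
      rw [show θ - 1 * ε = θ - ε by ring] at hsets h2memm
      refine Or.inr ⟨⟨hsubset, hsets, hrank⟩, ?_⟩
      rintro ⟨hsub', _, _⟩
      exact h2memm (hsub' (by simp))
    · rw [show θ + (-1) * ε = θ - ε by ring] at hsubset hsets hrank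
      rw [show θ - (-1) * ε = θ + ε by ring] at hsets h2memm
      refine Or.inl ⟨⟨hsubset, hsets, hrank⟩, ?_⟩
      rintro ⟨hsub', _, _⟩
      exact h2memm (hsub' (by simp))
  -- extract ε₀
  rw [eventually_iff, hl, mem_nhdsGT_iff_exists_Ioo_subset] at hfinal
  obtain ⟨u, hu, hsub⟩ := hfinal
  exact ⟨u, hu, fun ε hε1 hε2 => hsub ⟨hε1, hε2⟩⟩
end
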